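/- arXiv:1907.11120 — 2 statements merged into one kernel-verified Lean document; each statement's English description precedes it below -/
import Mathlib

section
/- Let Γ ⊆ Sym({1,…,n}) be a permutation group and let d be odd. If v, v̄ ∈ S_d(Γ) are irreducible, not equivalent, and their arrangement spaces are not orthogonal subspaces of ℝ^n, then v and v̄ are deformation equivalent. -/
open Matrix

/-- The matrix of an arrangement of `n` points in `ℝ^d`: the `i`-th row is the point `v i`. -/
def arrMat {n d : ℕ} (v : Fin n → Fin d → ℝ) : Matrix (Fin n) (Fin d) ℝ := Matrix.of v

/-- An arrangement is normalized if `MᵀM` is the identity matrix. -/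
def IsNormalized {n d : ℕ} (v : Fin n → Fin d → ℝ) : Prop :=
  (arrMat v)ᵀ * arrMat v = 1

/-- The arrangement space of `v`: the column span of its matrix, a subspace of `ℝ^n`. -/
def arrSpace {n d : ℕ} (v : Fin n → Fin d → ℝ) : Submodule ℝ (Fin n → ℝ) :=
  Submodule.span ℝ (Set.range (arrMat v)ᵀ)

/-- `detPair v w = det (M_wᵀ * M_v)`, i.e. `det(v, w̄) = det(M̄ᵀ M)` with `w` playing `v̄`. -/
noncomputable def detPair {n d : ℕ} (v w : Fin n → Fin d → ℝ) : ℝ :=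
  ((arrMat w)ᵀ * arrMat v).det

/-- Two subspaces `U, W ⊆ ℝ^n` are orthogonal if `⟨u, w⟩ = 0` for all `u ∈ U`, `w ∈ W`. -/
def OrthSpaces {n : ℕ} (U W : Submodule ℝ (Fin n → ℝ)) : Prop :=
  ∀ u ∈ U, ∀ w ∈ W, u ⬝ᵥ w = 0

/-- Arrangements are equivalent if related by an invertible linear map `X`. -/
def AreEquivalent {n d : ℕ} (v w : Fin n → Fin d → ℝ) : Prop :=
  ∃ X : Matrix (Fin d) (Fin d) ℝ, X.det ≠ 0 ∧ ∀ i, X.mulVec (v i) = w i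

/-- Arrangements are positively equivalent if related by a linear map of positive determinant. -/
def PosEquivalent {n d : ℕ} (v w : Fin n → Fin d → ℝ) : Prop :=
  ∃ X : Matrix (Fin d) (Fin d) ℝ, 0 < X.det ∧ ∀ i, X.mulVec (v i) = w i

/-- `T : Γ → O(ℝ^d)` is a representation: orthogonal values and multiplicative. -/
def IsRep {n d : ℕ} (Γ : Subgroup (Equiv.Perm (Fin n)))
    (T : Γ → Matrix (Fin d) (Fin d) ℝ) : Prop :=
  (∀ φ, (T φ)ᵀ * T φ = 1) ∧ (∀ φ ψ, T (φ * ψ) = T φ * T ψ)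

/-- `T` is a representation of the arrangement `v`: `T_φ v_i = v_{φ(i)}`. -/
def IsRepOf {n d : ℕ} (Γ : Subgroup (Equiv.Perm (Fin n)))
    (T : Γ → Matrix (Fin d) (Fin d) ℝ) (v : Fin n → Fin d → ℝ) : Prop :=
  IsRep Γ T ∧ ∀ (φ : Γ) (i : Fin n), (T φ).mulVec (v i) = v (φ.val i)

/-- `v` is a `Γ`-arrangement if it has a representation. -/
def IsGammaArr {n d : ℕ} (Γ : Subgroup (Equiv.Perm (Fin n)))
    (v : Fin n → Fin d → ℝ) : Prop :=
  ∃ T : Γ → Matrix (Fin d) (Fin d) ℝ, IsRepOf Γ T v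

/-- A representation is irreducible if the only invariant subspaces of `ℝ^d` are `⊥` and `⊤`. -/
def IrredRep {n d : ℕ} (Γ : Subgroup (Equiv.Perm (Fin n)))
    (T : Γ → Matrix (Fin d) (Fin d) ℝ) : Prop :=
  ∀ W : Submodule ℝ (Fin d → ℝ), (∀ (φ : Γ), ∀ x ∈ W, (T φ).mulVec x ∈ W) → W = ⊥ ∨ W = ⊤

/-- Representations are isomorphic: an invertible equivariant map exists. -/
def IsoReps {n d : ℕ} (Γ : Subgroup (Equiv.Perm (Fin n)))
    (T T' : Γ → Matrix (Fin d) (Fin d) ℝ) : Prop :=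
  ∃ R : Matrix (Fin d) (Fin d) ℝ, R.det ≠ 0 ∧ ∀ φ, R * T φ = T' φ * R

/-- Representations are positively isomorphic: an equivariant map with positive determinant. -/
def PosIsoReps {n d : ℕ} (Γ : Subgroup (Equiv.Perm (Fin n)))
    (T T' : Γ → Matrix (Fin d) (Fin d) ℝ) : Prop :=
  ∃ R : Matrix (Fin d) (Fin d) ℝ, 0 < R.det ∧ ∀ φ, R * T φ = T' φ * R

/-- `S_d(Γ)`: the set of normalized `Γ`-arrangements of `n` points in `ℝ^d`. -/
def SdSet (n d : ℕ) (Γ : Subgroup (Equiv.Perm (Fin n))) : Set (Fin n → Fin d → ℝ) :=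
  {v | IsNormalized v ∧ IsGammaArr Γ v}

/-- Deformation equivalence: a continuous path in `S_d(Γ)` from `v` to `w`. -/
def DeformEquiv {n d : ℕ} (Γ : Subgroup (Equiv.Perm (Fin n)))
    (v w : Fin n → Fin d → ℝ) : Prop :=
  ∃ c : ℝ → (Fin n → Fin d → ℝ), ContinuousOn c (Set.Icc 0 1) ∧
    (∀ t ∈ Set.Icc (0:ℝ) 1, c t ∈ SdSet n d Γ) ∧ c 0 = v ∧ c 1 = w

/-- `v` is flexible if it can be deformed into some non-equivalent arrangement. -/
def Flexible {n d : ℕ} (Γ : Subgroup (Equiv.Perm (Fin n))) (v : Fin n → Fin d → ℝ) : Prop :=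
  ∃ w : Fin n → Fin d → ℝ, DeformEquiv Γ v w ∧ ¬ AreEquivalent v w

/-- A subspace `W ⊆ ℝ^n` is `Γ`-invariant (under the permutation action). -/
def GammaInvariant {n : ℕ} (Γ : Subgroup (Equiv.Perm (Fin n)))
    (W : Submodule ℝ (Fin n → ℝ)) : Prop :=
  ∀ (φ : Γ), ∀ x ∈ W, (fun i => x (φ.val⁻¹ i)) ∈ W

/-!
The cross Gram matrix `A = M̄ᵀ M` of `v` and `v̄` (with matrices `M`, `M̄`) intertwines their
representations, so `AᵀA` commutes with the irreducible `T`; being symmetric it is a scalar `α`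
(Schur). Non-orthogonality of the arrangement spaces gives `α > 0`, and `α < 1` because
`(M - M̄ A)ᵀ (M - M̄ A) = (1 - α) • 1`, where `α = 1` would give `M = M̄ A`, making `v` and `v̄`
equivalent. As `d` is odd, `A = c Q` with `Q ∈ SO(d)` and `c² = α < 1`.
The arrangement `Qᵀ v̄` has representation `T` and cross Gram matrix `c • 1` with `v`, so a great
circle joins `v` to `Qᵀ v̄` inside `S_d(Γ)`. Finally `Qᵀ v̄` is joined to `v̄` by rotating along a
path from `Qᵀ` to `1` in `SO(d)`: by Cartan–Dieudonné every element of `SO(d)` is a product of an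
even number of hyperplane reflections, and any two hyperplane reflections are joined by a path of
hyperplane reflections.
-/

open Submodule Matrix
open scoped RealInnerProductSpace

section HyperplaneReflections

variable {H : Type*} [NormedAddCommGroup H] [InnerProductSpace ℝ H]

def hyperplaneReflections (H : Type*) [NormedAddCommGroup H] [InnerProductSpace ℝ H] :
    Set (H →L[ℝ] H) :=
  {g | ∃ z : H, z ≠ 0 ∧ g = (ℝ ∙ z)ᗮ.reflection}

lemma reflection_orthogonal_singleton_apply (z x : H) :
    (ℝ ∙ z)ᗮ.reflection x = x - (2 * ⟪z, x⟫ / ‖z‖ ^ 2) • z := by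
  rw [reflection_orthogonal_apply, reflection_singleton_apply, mul_div_assoc, mul_smul]
  module

lemma coe_reflection_mem_unitary [CompleteSpace H] (K : Submodule ℝ H)
    [K.HasOrthogonalProjection] : (K.reflection : H →L[ℝ] H) ∈ unitary (H →L[ℝ] H) :=
  (Unitary.linearIsometryEquiv.symm K.reflection).2

lemma smul_add_smul_ne_zero_of_inner_nonneg {u v : H} (hu : u ≠ 0) (hv : v ≠ 0)
    (huv : 0 ≤ ⟪u, v⟫) {t : ℝ} (ht : t ∈ Set.Icc (0 : ℝ) 1) : (1 - t) • u + t • v ≠ 0 := by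
  intro h
  have hu' : (1 - t) * ‖u‖ ^ 2 + t * ⟪u, v⟫ = 0 := by
    simpa [inner_add_right, inner_smul_right, real_inner_self_eq_norm_sq] using
      congrArg (⟪u, ·⟫) h
  have hv' : (1 - t) * ⟪u, v⟫ + t * ‖v‖ ^ 2 = 0 := by
    simpa [inner_add_right, inner_smul_right, real_inner_self_eq_norm_sq, real_inner_comm] using
      congrArg (⟪v, ·⟫) h
  have := pow_pos (norm_pos_iff.2 hu) 2
  have := pow_pos (norm_pos_iff.2 hv) 2
  obtain ⟨h0, h1⟩ := ht
  nlinarith [mul_nonneg h0 huv, mul_nonneg (sub_nonneg.2 h1) huv]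

lemma mul_self_of_mem_hyperplaneReflections {g : H →L[ℝ] H}
    (hg : g ∈ hyperplaneReflections H) : g * g = 1 := by
  obtain ⟨z, -, rfl⟩ := hg
  ext x
  simp

variable [FiniteDimensional ℝ H]

lemma hyperplaneReflections_subset_unitary :
    hyperplaneReflections H ⊆ unitary (H →L[ℝ] H) := by
  rintro _ ⟨z, -, rfl⟩
  exact coe_reflection_mem_unitary _

lemma continuousOn_reflection_orthogonal_singleton :
    ContinuousOn (fun z : H => ((ℝ ∙ z)ᗮ.reflection : H →L[ℝ] H)) {0}ᶜ := by
  refine continuousOn_clm_apply.2 fun x => ?_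
  simp only [ContinuousLinearEquiv.coe_coe, LinearIsometryEquiv.coe_toContinuousLinearEquiv,
    reflection_orthogonal_singleton_apply]
  refine continuousOn_const.sub (ContinuousOn.smul ?_ continuousOn_id)
  refine ContinuousOn.div (by fun_prop) (by fun_prop) fun z hz => ?_
  simpa using hz

lemma joinedIn_of_mem_hyperplaneReflections {g g' : H →L[ℝ] H}
    (hg : g ∈ hyperplaneReflections H) (hg' : g' ∈ hyperplaneReflections H) :
    JoinedIn (unitary (H →L[ℝ] H)) g g' := by
  obtain ⟨u, hu, rfl⟩ := hg
  obtain ⟨v, hv, rfl⟩ := hg'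
  wlog huv : 0 ≤ ⟪u, v⟫ generalizing v
  · simpa [← Set.neg_singleton, span_neg] using
      this (-v) (neg_ne_zero.2 hv) (by rw [inner_neg_right]; linarith)
  refine JoinedIn.ofLine
    (f := fun t : ℝ => ((ℝ ∙ ((1 - t) • u + t • v))ᗮ.reflection : H →L[ℝ] H))
    ?_ (by simp) (by simp) ?_
  · exact continuousOn_reflection_orthogonal_singleton.comp (by fun_prop)
      fun t ht => smul_add_smul_ne_zero_of_inner_nonneg hu hv huv ht
  · rintro _ ⟨t, -, rfl⟩
    exact coe_reflection_mem_unitary _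

lemma det_of_mem_hyperplaneReflections {g : H →L[ℝ] H} (hg : g ∈ hyperplaneReflections H) :
    LinearMap.det (g : H →ₗ[ℝ] H) = -1 := by
  obtain ⟨z, hz, rfl⟩ := hg
  rw [show (((ℝ ∙ z)ᗮ.reflection : H →L[ℝ] H) : H →ₗ[ℝ] H) = (ℝ ∙ z)ᗮ.reflection.toLinearMap
    from rfl, det_reflection, orthogonal_orthogonal, finrank_span_singleton hz, pow_one]

lemma det_list_prod_of_mem_hyperplaneReflections {L : List (H →L[ℝ] H)}
    (hL : ∀ g ∈ L, g ∈ hyperplaneReflections H) :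
    LinearMap.det (L.prod : H →ₗ[ℝ] H) = (-1) ^ L.length := by
  induction L with
  | nil => simp
  | cons g L ih =>
    simp only [List.forall_mem_cons] at hL
    rw [List.prod_cons, ContinuousLinearMap.toLinearMap_mul, map_mul,
      det_of_mem_hyperplaneReflections hL.1, ih hL.2, List.length_cons, pow_succ']

lemma joinedIn_one_list_prod_of_mem_hyperplaneReflections :
    ∀ L : List (H →L[ℝ] H), (∀ g ∈ L, g ∈ hyperplaneReflections H) → Even L.length →
      JoinedIn (unitary (H →L[ℝ] H)) 1 L.prod
  | [], _, _ => JoinedIn.refl (one_mem _)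
  | [_], _, h => by simp at h
  | g :: g' :: L, hL, h => by
    simp only [List.forall_mem_cons] at hL
    have hg : JoinedIn (unitary (H →L[ℝ] H)) (g * g) (g * g') :=
      ((JoinedIn.refl (hyperplaneReflections_subset_unitary hL.1)).mul
        (joinedIn_of_mem_hyperplaneReflections hL.1 hL.2.1)).mono
        (Submonoid.mul_subset subset_rfl subset_rfl)
    rw [mul_self_of_mem_hyperplaneReflections hL.1] at hg
    have hL' := joinedIn_one_list_prod_of_mem_hyperplaneReflections L hL.2.2
      (by simpa [Nat.even_add_one] using h)
    simpa [mul_assoc] using (hg.mul hL').mono (Submonoid.mul_subset subset_rfl subset_rfl)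

theorem LinearIsometryEquiv.joinedIn_one_of_det_eq_one (φ : H ≃ₗᵢ[ℝ] H)
    (hφ : LinearMap.det ((φ : H →L[ℝ] H) : H →ₗ[ℝ] H) = 1) :
    JoinedIn (unitary (H →L[ℝ] H)) 1 (φ : H →L[ℝ] H) := by
  classical
  obtain ⟨l, -, rfl⟩ := φ.reflections_generate_dim
  -- Cartan–Dieudonné may use the zero vector, whose "reflection" is the identity.
  set L := (l.map fun z => ((ℝ ∙ z)ᗮ.reflection : H →L[ℝ] H)).filter (· != 1)
  have hL : ∀ g ∈ L, g ∈ hyperplaneReflections H := by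
    intro g hg
    simp only [L, List.mem_filter, List.mem_map, bne_iff_ne] at hg
    obtain ⟨⟨z, -, rfl⟩, hg⟩ := hg
    refine ⟨z, fun hz => hg ?_, rfl⟩
    ext x
    simp [hz, reflection_mem_subspace_eq_self]
  have hprod : ((l.map fun z => (ℝ ∙ z)ᗮ.reflection).prod : H →L[ℝ] H) = L.prod := by
    rw [List.prod_filter_bne_one]
    have := map_list_prod ((unitary (H →L[ℝ] H)).subtype.comp
      (Unitary.linearIsometryEquiv (𝕜 := ℝ) (H := H)).symm.toMonoidHom)
      (l.map fun z => (ℝ ∙ z)ᗮ.reflection)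
    rwa [List.map_map] at this
  rw [hprod] at hφ ⊢
  rw [det_list_prod_of_mem_hyperplaneReflections hL, neg_one_pow_eq_one_iff_even (by norm_num)]
    at hφ
  exact joinedIn_one_list_prod_of_mem_hyperplaneReflections L hL hφ

end HyperplaneReflections

theorem Matrix.joinedIn_orthogonalGroup_one {ι : Type*} [Fintype ι] [DecidableEq ι]
    {R : Matrix ι ι ℝ} (hR : R ∈ orthogonalGroup ι ℝ) (hdet : R.det = 1) :
    JoinedIn (orthogonalGroup ι ℝ) 1 R := by
  let e := toEuclideanCLM (n := ι) (𝕜 := ℝ)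
  have hdet' : LinearMap.det ((e R : EuclideanSpace ℝ ι →L[ℝ] EuclideanSpace ℝ ι) :
      EuclideanSpace ℝ ι →ₗ[ℝ] EuclideanSpace ℝ ι) = 1 := by
    rw [← hdet, coe_toEuclideanCLM_eq_toEuclideanLin, LinearMap.det_toLpLin]
  have hpath :=
    (Unitary.linearIsometryEquiv ⟨e R, Unitary.map_mem e hR⟩).joinedIn_one_of_det_eq_one hdet'
  have he : Continuous e.symm :=
    LinearMap.continuous_of_finiteDimensional e.symm.toAlgEquiv.toLinearEquiv.toLinearMap
  convert (hpath.map he).mono ?_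
  · exact (map_one e.symm).symm
  · exact (e.symm_apply_apply R).symm
  · rintro _ ⟨g, hg, rfl⟩
    exact Unitary.map_mem e.symm hg

section Arrangements

variable {n d : ℕ} {Γ : Subgroup (Equiv.Perm (Fin n))}

def crossGram (v w : Fin n → Fin d → ℝ) : Matrix (Fin d) (Fin d) ℝ :=
  (arrMat w)ᵀ * arrMat v

lemma crossGram_self_of_isNormalized {v : Fin n → Fin d → ℝ} (hv : IsNormalized v) :
    crossGram v v = 1 :=
  hv

lemma transpose_crossGram (v w : Fin n → Fin d → ℝ) : (crossGram v w)ᵀ = crossGram w v := by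
  simp [crossGram, transpose_mul]

lemma arrMat_mulVec (X : Matrix (Fin d) (Fin d) ℝ) (v : Fin n → Fin d → ℝ) :
    arrMat (fun i => X *ᵥ v i) = arrMat v * Xᵀ := by
  ext i j
  simp [arrMat, mulVec, dotProduct, mul_apply, mul_comm]

lemma crossGram_mulVec_right (X : Matrix (Fin d) (Fin d) ℝ) (v w : Fin n → Fin d → ℝ) :
    crossGram v (fun i => X *ᵥ w i) = X * crossGram v w := by
  rw [crossGram, arrMat_mulVec, transpose_mul, transpose_transpose, Matrix.mul_assoc, crossGram]

lemma crossGram_mulVec_left (X : Matrix (Fin d) (Fin d) ℝ) (v w : Fin n → Fin d → ℝ) :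
    crossGram (fun i => X *ᵥ v i) w = crossGram v w * Xᵀ := by
  rw [← transpose_crossGram w, crossGram_mulVec_right, transpose_mul, transpose_crossGram]

lemma crossGram_comp_perm (σ : Equiv.Perm (Fin n)) (v w : Fin n → Fin d → ℝ) :
    crossGram (v ∘ σ) (w ∘ σ) = crossGram v w := by
  ext j k
  simpa [crossGram, mul_apply, arrMat] using Equiv.sum_comp σ (fun i => w i j * v i k)

lemma orthSpaces_arrSpace_of_crossGram_eq_zero {v w : Fin n → Fin d → ℝ}
    (h : crossGram v w = 0) : OrthSpaces (arrSpace v) (arrSpace w) := by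
  rintro _ hx _ hy
  obtain ⟨a, rfl⟩ : _ ∈ LinearMap.range (arrMat v).mulVecLin := by rwa [range_mulVecLin]
  obtain ⟨b, rfl⟩ : _ ∈ LinearMap.range (arrMat w).mulVecLin := by rwa [range_mulVecLin]
  have h' : crossGram w v = 0 := by rw [← transpose_crossGram, h, transpose_zero]
  rw [mulVecLin_apply, mulVecLin_apply, dotProduct_mulVec, vecMul_mulVec]
  rw [crossGram] at h'
  rw [h', vecMul_zero, zero_dotProduct]

lemma IsRepOf.comp_eq {T : Γ → Matrix (Fin d) (Fin d) ℝ} {v : Fin n → Fin d → ℝ}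
    (hT : IsRepOf Γ T v) (φ : Γ) : v ∘ φ.val = fun i => T φ *ᵥ v i :=
  funext fun i => (hT.2 φ i).symm

lemma IsRepOf.mul_crossGram_mul_transpose {T T' : Γ → Matrix (Fin d) (Fin d) ℝ}
    {v w : Fin n → Fin d → ℝ} (hT : IsRepOf Γ T v) (hT' : IsRepOf Γ T' w) (φ : Γ) :
    T' φ * crossGram v w * (T φ)ᵀ = crossGram v w := by
  calc T' φ * crossGram v w * (T φ)ᵀ
      = crossGram (fun i => T φ *ᵥ v i) (fun i => T' φ *ᵥ w i) := by
        rw [crossGram_mulVec_right, crossGram_mulVec_left, Matrix.mul_assoc]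
    _ = crossGram v w := by rw [← hT.comp_eq, ← hT'.comp_eq, crossGram_comp_perm]

lemma IsRep.conj {T : Γ → Matrix (Fin d) (Fin d) ℝ} (hT : IsRep Γ T)
    {R : Matrix (Fin d) (Fin d) ℝ} (hR : R ∈ orthogonalGroup (Fin d) ℝ) :
    IsRep Γ (fun φ => R * T φ * Rᵀ) := by
  have hR' : Rᵀ * R = 1 := (mem_orthogonalGroup_iff' _ _).1 hR
  refine ⟨fun φ => ?_, fun φ ψ => ?_⟩
  · simp only [transpose_mul, transpose_transpose, Matrix.mul_assoc]
    rw [← Matrix.mul_assoc Rᵀ R, hR', Matrix.one_mul, ← Matrix.mul_assoc (T φ)ᵀ, hT.1,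
      Matrix.one_mul, (mem_orthogonalGroup_iff _ _).1 hR]
  · simp only [hT.2, Matrix.mul_assoc]
    rw [← Matrix.mul_assoc Rᵀ R, hR', Matrix.one_mul]

lemma IsRepOf.mulVec {T T' : Γ → Matrix (Fin d) (Fin d) ℝ} {w : Fin n → Fin d → ℝ}
    (hT' : IsRepOf Γ T' w) (hT : IsRep Γ T) {X : Matrix (Fin d) (Fin d) ℝ}
    (hX : ∀ φ, X * T' φ = T φ * X) : IsRepOf Γ T (fun i => X *ᵥ w i) :=
  ⟨hT, fun φ i => by rw [mulVec_mulVec, ← hX, ← mulVec_mulVec, hT'.2]⟩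

lemma IsRepOf.smul_add_smul {T : Γ → Matrix (Fin d) (Fin d) ℝ} {v u : Fin n → Fin d → ℝ}
    (hv : IsRepOf Γ T v) (hu : IsRepOf Γ T u) (a b : ℝ) : IsRepOf Γ T (a • v + b • u) :=
  ⟨hv.1, fun φ i => by simp [mulVec_add, mulVec_smul, hv.2, hu.2]⟩

lemma IsNormalized.smul_add_smul {v u : Fin n → Fin d → ℝ} (hv : IsNormalized v)
    (hu : IsNormalized u) (huv : crossGram v u = 0) {a b : ℝ} (hab : a ^ 2 + b ^ 2 = 1) :
    IsNormalized (a • v + b • u) := by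
  have hvu : crossGram u v = 0 := by rw [← transpose_crossGram, huv, transpose_zero]
  change (a • arrMat v + b • arrMat u)ᵀ * (a • arrMat v + b • arrMat u) = 1
  unfold IsNormalized at hv hu
  unfold crossGram at huv hvu
  simp only [transpose_add, transpose_smul, Matrix.add_mul, Matrix.mul_add, smul_mul,
    Matrix.mul_smul, hv, hu, huv, hvu, smul_zero, add_zero, zero_add, smul_smul, ← add_smul]
  rw [← sq, ← sq, hab, one_smul]

lemma mulVec_mem_sdSet {R : Matrix (Fin d) (Fin d) ℝ} (hR : R ∈ orthogonalGroup (Fin d) ℝ)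
    {w : Fin n → Fin d → ℝ} (hw : w ∈ SdSet n d Γ) : (fun i => R *ᵥ w i) ∈ SdSet n d Γ := by
  obtain ⟨hwN, T', hT'⟩ := hw
  refine ⟨?_, _, hT'.mulVec (hT'.1.conj hR) fun φ => ?_⟩
  · change crossGram _ _ = 1
    rw [crossGram_mulVec_right, crossGram_mulVec_left, crossGram_self_of_isNormalized hwN,
      Matrix.one_mul, (mem_orthogonalGroup_iff _ _).1 hR]
  · rw [Matrix.mul_assoc, Matrix.mul_assoc, (mem_orthogonalGroup_iff' _ _).1 hR, Matrix.mul_one]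

lemma mul_eq_mul_of_mul_mul_transpose_eq {k : ℕ} {B X Y : Matrix (Fin k) (Fin k) ℝ}
    (hX : Xᵀ * X = 1) (h : Y * B * Xᵀ = B) : B * X = Y * B := by
  conv_lhs => rw [← h, Matrix.mul_assoc, hX, Matrix.mul_one]

lemma transpose_mul_self_conj_eq {k : ℕ} {A X Y : Matrix (Fin k) (Fin k) ℝ} (hY : Yᵀ * Y = 1)
    (h : Y * A * Xᵀ = A) : X * (Aᵀ * A) * Xᵀ = Aᵀ * A := by
  conv_rhs => rw [← h]
  simp only [transpose_mul, transpose_transpose, Matrix.mul_assoc]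
  rw [← Matrix.mul_assoc Yᵀ, hY, Matrix.one_mul]

lemma IrredRep.eq_smul_one_of_isHermitian {T : Γ → Matrix (Fin d) (Fin d) ℝ}
    (hT : IrredRep Γ T) {B : Matrix (Fin d) (Fin d) ℝ} (hB : B.IsHermitian)
    (hcomm : ∀ φ, B * T φ = T φ * B) : ∃ α : ℝ, B = α • 1 := by
  rcases isEmpty_or_nonempty (Fin d) with hd | ⟨⟨j⟩⟩
  · exact ⟨0, Subsingleton.elim _ _⟩
  set α := hB.eigenvalues j
  refine ⟨α, ?_⟩
  set E := LinearMap.ker (B - α • 1).mulVecLin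
  have hE : E = ⊤ := by
    refine (hT E fun φ x hx => ?_).resolve_left fun hbot => ?_
    · simp only [E, LinearMap.mem_ker, mulVecLin_apply] at hx ⊢
      have hcomm' : (B - α • 1) * T φ = T φ * (B - α • 1) := by
        rw [sub_mul, Matrix.mul_sub, hcomm, smul_mul, Matrix.mul_smul, Matrix.one_mul,
          Matrix.mul_one]
      rw [mulVec_mulVec, hcomm', ← mulVec_mulVec, hx, mulVec_zero]
    · have hv : ⇑(hB.eigenvectorBasis j) ∈ E := by
        simp [E, α, hB.mulVec_eigenvectorBasis j]
      rw [hbot, Submodule.mem_bot] at hv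
      exact hB.eigenvectorBasis.orthonormal.ne_zero j (by ext i; exact congrFun hv i)
  rw [← sub_eq_zero]
  apply toLin'.injective
  rw [toLin'_apply', map_zero, ← LinearMap.ker_eq_top]
  exact hE

lemma IrredRep.exists_transpose_mul_self_crossGram_eq_smul_one
    {T T' : Γ → Matrix (Fin d) (Fin d) ℝ} {v w : Fin n → Fin d → ℝ} (hTirr : IrredRep Γ T)
    (hT : IsRepOf Γ T v) (hT' : IsRepOf Γ T' w) :
    ∃ α : ℝ, (crossGram v w)ᵀ * crossGram v w = α • 1 :=
  hTirr.eq_smul_one_of_isHermitian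
    (by simpa using isHermitian_conjTranspose_mul_self (crossGram v w)) fun φ =>
      mul_eq_mul_of_mul_mul_transpose_eq (hT.1.1 φ)
        (transpose_mul_self_conj_eq (hT'.1.1 φ) (hT.mul_crossGram_mul_transpose hT' φ))

lemma nonneg_of_transpose_mul_self_eq_smul_one {m ι : Type*} [Fintype m] [DecidableEq ι]
    [Nonempty ι] {X : Matrix m ι ℝ} {c : ℝ} (h : Xᵀ * X = c • 1) : 0 ≤ c := by
  obtain ⟨j⟩ := ‹Nonempty ι›
  have hjj := congrFun (congrFun h j) j
  simp only [mul_apply, transpose_apply, Matrix.smul_apply, one_apply_eq, smul_eq_mul,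
    mul_one] at hjj
  rw [← hjj]
  exact Finset.sum_nonneg fun i _ => mul_self_nonneg (X i j)

lemma transpose_mul_self_sub_mul_crossGram {v w : Fin n → Fin d → ℝ} (hv : IsNormalized v)
    (hw : IsNormalized w) :
    (arrMat v - arrMat w * crossGram v w)ᵀ * (arrMat v - arrMat w * crossGram v w) =
      1 - (crossGram v w)ᵀ * crossGram v w := by
  unfold IsNormalized at hv hw
  unfold crossGram
  set M := arrMat v
  set W := arrMat w
  have hexp : (M - W * (Wᵀ * M))ᵀ * (M - W * (Wᵀ * M)) = Mᵀ * M - (Wᵀ * M)ᵀ * (Wᵀ * M) -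
      (Wᵀ * M)ᵀ * (Wᵀ * M) + (Wᵀ * M)ᵀ * (Wᵀ * W) * (Wᵀ * M) := by
    simp only [transpose_sub, transpose_mul, transpose_transpose, Matrix.sub_mul, Matrix.mul_sub,
      Matrix.mul_assoc]
    abel
  rw [hexp, hv, hw, Matrix.mul_one]
  abel

lemma areEquivalent_of_transpose_mul_self_crossGram_eq_one {v w : Fin n → Fin d → ℝ}
    (hv : IsNormalized v) (hw : IsNormalized w)
    (h : (crossGram v w)ᵀ * crossGram v w = 1) : AreEquivalent v w := by
  have hN := transpose_mul_self_sub_mul_crossGram hv hw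
  generalize crossGram v w = A at h hN
  rw [h, sub_self, ← conjTranspose_eq_transpose_of_trivial, conjTranspose_mul_self_eq_zero,
    sub_eq_zero, ← transpose_transpose A, ← arrMat_mulVec] at hN
  refine ⟨A, fun h0 => by simpa [h0] using congrArg det h, fun i => ?_⟩
  rw [show v i = Aᵀ *ᵥ w i from congrFun (congrArg Matrix.of.symm hN) i, mulVec_mulVec,
    mul_eq_one_comm.mp h, one_mulVec]

lemma pos_of_transpose_mul_self_crossGram_eq_smul_one [NeZero d] {v w : Fin n → Fin d → ℝ}
    {α : ℝ} (hα : (crossGram v w)ᵀ * crossGram v w = α • 1)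
    (horth : ¬ OrthSpaces (arrSpace v) (arrSpace w)) : 0 < α := by
  refine (nonneg_of_transpose_mul_self_eq_smul_one hα).lt_of_ne' fun h0 => horth ?_
  rw [h0, zero_smul, ← conjTranspose_eq_transpose_of_trivial,
    conjTranspose_mul_self_eq_zero] at hα
  exact orthSpaces_arrSpace_of_crossGram_eq_zero hα

lemma lt_one_of_transpose_mul_self_crossGram_eq_smul_one [NeZero d] {v w : Fin n → Fin d → ℝ}
    (hv : IsNormalized v) (hw : IsNormalized w) {α : ℝ}
    (hα : (crossGram v w)ᵀ * crossGram v w = α • 1) (hne : ¬ AreEquivalent v w) : α < 1 := by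
  have hN := transpose_mul_self_sub_mul_crossGram hv hw
  rw [hα, show (1 : Matrix (Fin d) (Fin d) ℝ) - α • 1 = (1 - α) • 1 by rw [sub_smul, one_smul]]
    at hN
  refine (sub_nonneg.1 (nonneg_of_transpose_mul_self_eq_smul_one hN)).lt_of_ne fun h1 => hne ?_
  exact areEquivalent_of_transpose_mul_self_crossGram_eq_one hv hw (by rw [hα, h1, one_smul])

lemma exists_eq_smul_of_transpose_mul_self_eq_smul_one {k : ℕ} (hk : Odd k)
    {A : Matrix (Fin k) (Fin k) ℝ} {α : ℝ} (hα : 0 < α) (h : Aᵀ * A = α • 1) :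
    ∃ (c : ℝ) (Q : Matrix (Fin k) (Fin k) ℝ),
      c ^ 2 = α ∧ Q ∈ orthogonalGroup (Fin k) ℝ ∧ Q.det = 1 ∧ A = c • Q := by
  have hsα : (√α)⁻¹ * (√α)⁻¹ * α = 1 := by
    rw [← mul_inv, Real.mul_self_sqrt hα.le, inv_mul_cancel₀ hα.ne']
  set Q₀ := (√α)⁻¹ • A
  have hQ₀ : Q₀ᵀ * Q₀ = 1 := by
    rw [transpose_smul, smul_mul, Matrix.mul_smul, h, smul_smul, smul_smul, hsα, one_smul]
  set ε := Q₀.det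
  have hε : ε * ε = 1 := by simpa using congrArg det hQ₀
  refine ⟨ε * √α, ε • Q₀, ?_, ?_, ?_, ?_⟩
  · rw [mul_pow, sq ε, hε, one_mul, Real.sq_sqrt hα.le]
  · rw [mem_orthogonalGroup_iff', transpose_smul, smul_mul, Matrix.mul_smul, hQ₀, smul_smul, hε,
      one_smul]
  · obtain ⟨m, rfl⟩ := hk
    rw [det_smul, Fintype.card_fin, pow_succ, mul_assoc, hε, mul_one, pow_mul, sq, hε, one_pow]
  · have hsα' : √α ≠ 0 := (Real.sqrt_pos.2 hα).ne'
    rw [smul_smul, smul_smul, show ε * √α * ε * (√α)⁻¹ = ε * ε by field_simp, hε, one_smul]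

lemma IsRepOf.mulVec_transpose_of_crossGram_eq_smul {T T' : Γ → Matrix (Fin d) (Fin d) ℝ}
    {v w : Fin n → Fin d → ℝ} (hT : IsRepOf Γ T v) (hT' : IsRepOf Γ T' w) {c : ℝ} (hc : c ≠ 0)
    {Q : Matrix (Fin d) (Fin d) ℝ} (hQ : crossGram v w = c • Q) :
    IsRepOf Γ T (fun i => Qᵀ *ᵥ w i) := by
  refine hT'.mulVec hT.1 fun φ => mul_eq_mul_of_mul_mul_transpose_eq (hT'.1.1 φ) ?_
  have := hT.mul_crossGram_mul_transpose hT' φ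
  rw [hQ, Matrix.mul_smul, smul_mul] at this
  simpa [transpose_mul, Matrix.mul_assoc] using congrArg transpose (smul_right_injective _ hc this)

lemma isNormalized_and_crossGram_eq_zero_of_crossGram_eq_smul_one {v w : Fin n → Fin d → ℝ}
    (hv : IsNormalized v) (hw : IsNormalized w) {c : ℝ} (hc : c ^ 2 < 1)
    (h : crossGram v w = c • 1) :
    IsNormalized ((√(1 - c ^ 2))⁻¹ • (w - c • v)) ∧
      crossGram v ((√(1 - c ^ 2))⁻¹ • (w - c • v)) = 0 := by
  have hs : √(1 - c ^ 2) ≠ 0 := (Real.sqrt_pos.2 (by linarith)).ne'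
  set s := √(1 - c ^ 2)
  have hwv : crossGram w v = c • 1 := by
    rw [← transpose_crossGram, h, transpose_smul, transpose_one]
  have hvM : (arrMat v)ᵀ * arrMat v = 1 := hv
  have hwM : (arrMat w)ᵀ * arrMat w = 1 := hw
  unfold crossGram at h hwv
  refine ⟨?_, ?_⟩
  · change (s⁻¹ • (arrMat w - c • arrMat v))ᵀ * (s⁻¹ • (arrMat w - c • arrMat v)) = 1
    simp only [transpose_smul, transpose_sub, smul_mul, Matrix.mul_smul, Matrix.sub_mul,
      Matrix.mul_sub, hvM, hwM, h, hwv, smul_smul]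
    have hss : s⁻¹ * s⁻¹ * (1 - c * c) = 1 := by
      rw [← mul_inv, ← sq c, ← Real.sq_sqrt (by linarith : 0 ≤ 1 - c ^ 2), ← sq, inv_mul_cancel₀]
      exact pow_ne_zero 2 hs
    rw [sub_self, smul_zero, sub_zero, smul_smul, ← one_smul ℝ (1 : Matrix (Fin d) (Fin d) ℝ),
      smul_smul, ← sub_smul, smul_smul, mul_one, hss, one_smul]
  · change (s⁻¹ • (arrMat w - c • arrMat v))ᵀ * arrMat v = 0
    simp [transpose_sub, Matrix.sub_mul, h, hvM]

theorem joinedIn_sdSet_of_crossGram_eq_smul_one {T : Γ → Matrix (Fin d) (Fin d) ℝ}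
    {v w : Fin n → Fin d → ℝ} (hv : IsNormalized v) (hw : IsNormalized w) (hTv : IsRepOf Γ T v)
    (hTw : IsRepOf Γ T w) {c : ℝ} (hc : c ^ 2 < 1) (h : crossGram v w = c • 1) :
    JoinedIn (SdSet n d Γ) v w := by
  obtain ⟨hu, huv⟩ := isNormalized_and_crossGram_eq_zero_of_crossGram_eq_smul_one hv hw hc h
  have hs : √(1 - c ^ 2) ≠ 0 := (Real.sqrt_pos.2 (by linarith)).ne'
  set s := √(1 - c ^ 2)
  -- `u` is the Gram–Schmidt normalisation of `w` against `v`; the path is the great circle.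
  set u := s⁻¹ • (w - c • v)
  have hTu : IsRepOf Γ T u := by
    simpa [u, smul_sub, sub_eq_add_neg, ← neg_smul, smul_smul, add_comm] using
      hTw.smul_add_smul hTv s⁻¹ (-(s⁻¹ * c))
  refine JoinedIn.ofLine (f := fun t => Real.cos (t * Real.arccos c) • v +
    Real.sin (t * Real.arccos c) • u) (by fun_prop) (by simp) ?_ ?_
  · have hc1 : -1 ≤ c ∧ c ≤ 1 := by constructor <;> nlinarith
    rw [one_mul, Real.cos_arccos hc1.1 hc1.2, Real.sin_arccos]
    change c • v + s • (s⁻¹ • (w - c • v)) = w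
    rw [smul_smul, mul_inv_cancel₀ hs, one_smul]
    abel
  · rintro _ ⟨t, -, rfl⟩
    exact ⟨hv.smul_add_smul hu huv (Real.cos_sq_add_sin_sq _), T, hTv.smul_add_smul hTu _ _⟩

theorem joinedIn_sdSet_mulVec {R : Matrix (Fin d) (Fin d) ℝ}
    (hR : R ∈ orthogonalGroup (Fin d) ℝ) (hdet : R.det = 1) {w : Fin n → Fin d → ℝ}
    (hw : w ∈ SdSet n d Γ) : JoinedIn (SdSet n d Γ) w (fun i => R *ᵥ w i) := by
  have hpath := (joinedIn_orthogonalGroup_one hR hdet).map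
    (f := fun X : Matrix (Fin d) (Fin d) ℝ => fun i => X *ᵥ w i) (by fun_prop)
  simp only [one_mulVec] at hpath
  exact hpath.mono (Set.image_subset_iff.2 fun X hX => mulVec_mem_sdSet hX hw)

lemma deformEquiv_of_joinedIn {v w : Fin n → Fin d → ℝ} (h : JoinedIn (SdSet n d Γ) v w) :
    DeformEquiv Γ v w := by
  obtain ⟨γ, hγ⟩ := h
  refine ⟨γ.extend, γ.continuous_extend.continuousOn, fun t ht => ?_, γ.extend_zero,
    γ.extend_one⟩
  rw [γ.extend_apply ht]
  exact hγ _

end Arrangements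

theorem stmt16_general {n d : ℕ} (Γ : Subgroup (Equiv.Perm (Fin n))) (hd : Odd d)
    (v w : Fin n → Fin d → ℝ)
    (hv : v ∈ SdSet n d Γ) (hw : w ∈ SdSet n d Γ)
    (T T' : Γ → Matrix (Fin d) (Fin d) ℝ)
    (hT : IsRepOf Γ T v) (hTirr : IrredRep Γ T)
    (hT' : IsRepOf Γ T' w)
    (hne : ¬ AreEquivalent v w)
    (horth : ¬ OrthSpaces (arrSpace v) (arrSpace w)) :
    DeformEquiv Γ v w := by
  have : NeZero d := ⟨hd.pos.ne'⟩
  obtain ⟨α, hα⟩ := hTirr.exists_transpose_mul_self_crossGram_eq_smul_one hT hT'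
  have hα0 := pos_of_transpose_mul_self_crossGram_eq_smul_one hα horth
  have hα1 := lt_one_of_transpose_mul_self_crossGram_eq_smul_one hv.1 hw.1 hα hne
  obtain ⟨c, Q, rfl, hQ, hQdet, hAQ⟩ := exists_eq_smul_of_transpose_mul_self_eq_smul_one hd hα0 hα
  have hQt : Qᵀ ∈ orthogonalGroup (Fin d) ℝ := transpose_mem_unitaryGroup_iff.2 hQ
  have hcross : crossGram v (fun i => Qᵀ *ᵥ w i) = c • 1 := by
    rw [crossGram_mulVec_right, hAQ, Matrix.mul_smul, (mem_orthogonalGroup_iff' _ _).1 hQ]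
  have hTQ := hT.mulVec_transpose_of_crossGram_eq_smul hT' (by rintro rfl; simp at hα0) hAQ
  exact deformEquiv_of_joinedIn <|
    (joinedIn_sdSet_of_crossGram_eq_smul_one hv.1 (mulVec_mem_sdSet hQt hw).1 hT hTQ hα1
      hcross).trans (joinedIn_sdSet_mulVec hQt (by rwa [det_transpose]) hw).symm

theorem stmt16 {n d : ℕ} (Γ : Subgroup (Equiv.Perm (Fin n))) (hd : Odd d)
    (v w : Fin n → Fin d → ℝ)
    (hv : v ∈ SdSet n d Γ) (hw : w ∈ SdSet n d Γ)
    (T T' : Γ → Matrix (Fin d) (Fin d) ℝ)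
    (hT : IsRepOf Γ T v) (hTirr : IrredRep Γ T)
    (hT' : IsRepOf Γ T' w) (hT'irr : IrredRep Γ T')
    (hne : ¬ AreEquivalent v w)
    (horth : ¬ OrthSpaces (arrSpace v) (arrSpace w)) :
    DeformEquiv Γ v w :=
  stmt16_general Γ hd v w hv hw T T' hT hTirr hT' hne horth
end

section
/- Let Γ ⊆ Sym({1,…,n}) be a permutation group and d ≥ 1. Suppose v^1,…,v^k are normalized irreducible rigid Γ-arrangements of n points, where v^j has dimension d_j ≥ d (i.e., v^j consists of points in ℝ^{d_j} with d_j ≥ d), and suppose that no two of them are equivalent (arrangements of different dimensions are never equivalent). Then d·k ≤ n, i.e., k ≤ n/d. -/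
open Matrix

/-- Isomorphy of representations possibly living in different dimensions:
an equivariant bijective linear map (forcing the dimensions to agree). -/
def IsoRepsDep {n e e' : ℕ} (Γ : Subgroup (Equiv.Perm (Fin n)))
    (T : Γ → Matrix (Fin e) (Fin e) ℝ) (T' : Γ → Matrix (Fin e') (Fin e') ℝ) : Prop :=
  ∃ R : (Fin e → ℝ) →ₗ[ℝ] (Fin e' → ℝ), Function.Bijective R ∧
    ∀ (φ : Γ) (x : Fin e → ℝ), R ((T φ).mulVec x) = (T' φ).mulVec (R x)

/-- Equivalence of arrangements possibly living in different dimensions: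
a bijective linear map carrying one to the other (never holds across dimensions). -/
def AreEquivalentDep {n e e' : ℕ} (v : Fin n → Fin e → ℝ) (w : Fin n → Fin e' → ℝ) : Prop :=
  ∃ X : (Fin e → ℝ) →ₗ[ℝ] (Fin e' → ℝ), Function.Bijective X ∧ ∀ i, X (v i) = w i

/-!
Write `M`, `N` for the matrices of a rigid irreducible arrangement `v` and of an irreducible
arrangement `w` not equivalent to it, and `K = NᵀM`. The commutator `A` of the orthogonal
projections `NNᵀ` and `MMᵀ` is skew-symmetric and commutes with `Γ`, so its Cayley transforms
`(1 - tA)⁻¹(1 + tA)` are orthogonal and move `M` through normalized `Γ`-arrangements. Rigidity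
forces `AM = 0`, i.e. `NK = M KᵀK`. Since `K` intertwines the two irreducible representations,
Schur's lemma gives `K = 0` or `K` invertible, and in the latter case `K` is orthogonal and maps `v`
onto `w`. So the arrangement spaces of the `v j` are pairwise orthogonal, and their dimensions, each
at least `d`, add up to at most `n`.
-/

section Cayley

variable {ι : Type*} [Fintype ι] [DecidableEq ι]

lemma Matrix.det_one_sub_ne_zero_of_transpose_eq_neg {A : Matrix ι ι ℝ} (hA : Aᵀ = -A) :
    (1 - A).det ≠ 0 := by
  intro hdet
  obtain ⟨x, hx0, hx⟩ := Matrix.exists_mulVec_eq_zero_iff.mpr hdet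
  have hAx : A *ᵥ x = x := by
    rw [sub_mulVec, one_mulVec, sub_eq_zero] at hx
    exact hx.symm
  have hskew : x ⬝ᵥ A *ᵥ x = (Aᵀ *ᵥ x) ⬝ᵥ x := by rw [mulVec_transpose, dotProduct_mulVec]
  rw [hA, neg_mulVec, neg_dotProduct, dotProduct_comm, hAx] at hskew
  exact hx0 (dotProduct_self_eq_zero.mp (by linarith))

lemma Matrix.det_one_add_ne_zero_of_transpose_eq_neg {A : Matrix ι ι ℝ} (hA : Aᵀ = -A) :
    (1 + A).det ≠ 0 := by
  simpa using det_one_sub_ne_zero_of_transpose_eq_neg (A := -A) (by rw [transpose_neg, hA])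

noncomputable def Matrix.cayley (A : Matrix ι ι ℝ) : Matrix ι ι ℝ := (1 - A)⁻¹ * (1 + A)

lemma Matrix.one_sub_mul_cayley {A : Matrix ι ι ℝ} (hA : Aᵀ = -A) :
    (1 - A) * cayley A = 1 + A := by
  rw [cayley, ← Matrix.mul_assoc,
    mul_nonsing_inv _ (det_one_sub_ne_zero_of_transpose_eq_neg hA).isUnit, Matrix.one_mul]

lemma Matrix.cayley_transpose_mul_self {A : Matrix ι ι ℝ} (hA : Aᵀ = -A) :
    (cayley A)ᵀ * cayley A = 1 := by
  have hsub := (det_one_sub_ne_zero_of_transpose_eq_neg hA).isUnit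
  have hadd := (det_one_add_ne_zero_of_transpose_eq_neg hA).isUnit
  have hcomm : (1 + A) * (1 - A) = (1 - A) * (1 + A) := by
    simp only [Matrix.add_mul, Matrix.mul_sub, Matrix.sub_mul, Matrix.mul_add, Matrix.one_mul,
      Matrix.mul_one]
    abel
  have hinv : (1 + A)⁻¹ * (1 - A)⁻¹ = (1 - A)⁻¹ * (1 + A)⁻¹ := by
    rw [← Matrix.mul_inv_rev, ← Matrix.mul_inv_rev, hcomm]
  have htr : (1 + A)ᵀ = 1 - A := by rw [transpose_add, transpose_one, hA, sub_eq_add_neg]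
  calc (cayley A)ᵀ * cayley A
      = (1 - A) * ((1 + A)⁻¹ * (1 - A)⁻¹) * (1 + A) := by
        rw [cayley, transpose_mul, transpose_nonsing_inv, htr,
          show (1 - A)ᵀ = 1 + A by rw [← htr, transpose_transpose]]
        simp only [Matrix.mul_assoc]
    _ = 1 := by
        rw [hinv, ← Matrix.mul_assoc, mul_nonsing_inv _ hsub, Matrix.one_mul,
          nonsing_inv_mul _ hadd]

lemma Matrix.continuous_cayley_smul {A : Matrix ι ι ℝ} (hA : Aᵀ = -A) :
    Continuous fun t : ℝ => cayley (t • A) := by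
  have hskew : ∀ t : ℝ, (t • A)ᵀ = -(t • A) := fun t => by rw [transpose_smul, hA, smul_neg]
  have hlin : Continuous fun t : ℝ => t • A := continuous_id.smul continuous_const
  refine Continuous.matrix_mul ?_ (continuous_const.add hlin)
  simp_rw [inv_def, Ring.inverse_eq_inv']
  exact (((continuous_const.sub hlin).matrix_det).inv₀
    fun t => det_one_sub_ne_zero_of_transpose_eq_neg (hskew t)).smul
    (continuous_const.sub hlin).matrix_adjugate

end Cayley

section LinearAlgebra

variable {R : Type*} [CommRing R] {l m o : Type*} [Fintype m]

lemma Matrix.eq_zero_of_mul_eq_zero_of_injective [Fintype o] [DecidableEq o] {K : Matrix l m R}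
    (hK : Function.Injective K.mulVecLin) {X : Matrix m o R} (h : K * X = 0) : X = 0 :=
  ext_of_mulVec_single fun i => hK <| by
    simp only [mulVecLin_apply, mulVec_mulVec, h, zero_mulVec, mulVec_zero]

lemma Matrix.eq_zero_of_mul_eq_zero_of_surjective [DecidableEq m] [Fintype o] {K : Matrix m o R}
    (hK : Function.Surjective K.mulVecLin) {X : Matrix l m R} (h : X * K = 0) : X = 0 :=
  ext_of_mulVec_single fun i => by
    obtain ⟨y, hy⟩ := hK (Pi.single i 1)
    rw [← hy, mulVecLin_apply, mulVec_mulVec, h, zero_mulVec, zero_mulVec]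

lemma Matrix.eq_zero_of_mulVecLin_eq_zero [DecidableEq m] {K : Matrix l m R}
    (h : K.mulVecLin = 0) : K = 0 :=
  ext_of_mulVec_single fun i => by
    rw [← mulVecLin_apply, h, zero_mulVec]; rfl

lemma Matrix.card_le_card_of_transpose_mul_self_eq_one [DecidableEq m] [Fintype o]
    [StrongRankCondition R] {B : Matrix o m R} (h : Bᵀ * B = 1) : Fintype.card m ≤ Fintype.card o :=
  calc Fintype.card m = (Bᵀ * B).rank := by rw [h, rank_one]
    _ ≤ B.rank := rank_mul_le_right _ _
    _ ≤ Fintype.card o := rank_le_card_height _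

end LinearAlgebra

section Arrangements

variable {n : ℕ} (Γ : Subgroup (Equiv.Perm (Fin n)))

lemma arrMat_mul_transpose_apply {d e : ℕ} (v : Fin n → Fin d → ℝ) (X : Matrix (Fin e) (Fin d) ℝ)
    (i : Fin n) : (arrMat v * Xᵀ) i = X *ᵥ v i := by
  funext a
  simp [arrMat, mul_apply, mulVec, dotProduct, mul_comm]

lemma forall_mulVec_eq_iff {d e : ℕ} (X : Matrix (Fin e) (Fin d) ℝ) (v : Fin n → Fin d → ℝ)
    (w : Fin n → Fin e → ℝ) : (∀ i, X *ᵥ v i = w i) ↔ arrMat v * Xᵀ = arrMat w := by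
  simp only [← arrMat_mul_transpose_apply]
  exact funext_iff.symm

lemma isRepOf_iff {d : ℕ} {T : Γ → Matrix (Fin d) (Fin d) ℝ} {v : Fin n → Fin d → ℝ} :
    IsRepOf Γ T v ↔
      IsRep Γ T ∧ ∀ φ : Γ, (arrMat v).submatrix φ.val id = arrMat v * (T φ)ᵀ :=
  and_congr_right' <| forall_congr' fun φ =>
    (forall_mulVec_eq_iff (T φ) v fun i => v (φ.val i)).trans eq_comm

/-- `A` commutes with the permutation matrices of `Γ`. -/
def PermInvariant (A : Matrix (Fin n) (Fin n) ℝ) : Prop :=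
  ∀ φ : Γ, A.submatrix φ.val φ.val = A

namespace PermInvariant

variable {Γ} {A B : Matrix (Fin n) (Fin n) ℝ}

lemma one : PermInvariant Γ 1 := fun φ => submatrix_one_equiv φ.val

lemma add (hA : PermInvariant Γ A) (hB : PermInvariant Γ B) : PermInvariant Γ (A + B) :=
  fun φ => by rw [submatrix_add, Pi.add_apply, Pi.add_apply, hA φ, hB φ]

lemma sub (hA : PermInvariant Γ A) (hB : PermInvariant Γ B) : PermInvariant Γ (A - B) :=
  fun φ => by rw [submatrix_sub, Pi.sub_apply, Pi.sub_apply, hA φ, hB φ]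

lemma smul (hA : PermInvariant Γ A) (t : ℝ) : PermInvariant Γ (t • A) :=
  fun φ => by rw [submatrix_smul, Pi.smul_apply, Pi.smul_apply, hA φ]

lemma mul (hA : PermInvariant Γ A) (hB : PermInvariant Γ B) : PermInvariant Γ (A * B) :=
  fun φ => by rw [← submatrix_mul_equiv A B φ.val φ.val φ.val, hA φ, hB φ]

lemma inv (hA : PermInvariant Γ A) : PermInvariant Γ A⁻¹ :=
  fun φ => by rw [← inv_submatrix_equiv, hA φ]

lemma cayley (hA : PermInvariant Γ A) : PermInvariant Γ (cayley A) :=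
  (one.sub hA).inv.mul (one.add hA)

end PermInvariant

variable {Γ}

lemma IsRepOf.permInvariant_mul_transpose {d : ℕ} {T : Γ → Matrix (Fin d) (Fin d) ℝ}
    {v : Fin n → Fin d → ℝ} (hT : IsRepOf Γ T v) :
    PermInvariant Γ (arrMat v * (arrMat v)ᵀ) := fun φ => by
  have hperm := (isRepOf_iff Γ).mp hT
  calc (arrMat v * (arrMat v)ᵀ).submatrix φ.val φ.val
      = (arrMat v).submatrix φ.val id * ((arrMat v).submatrix φ.val id)ᵀ := rfl
    _ = arrMat v * ((T φ)ᵀ * T φ) * (arrMat v)ᵀ := by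
        rw [hperm.2 φ, transpose_mul, transpose_transpose]
        simp only [Matrix.mul_assoc]
    _ = arrMat v * (arrMat v)ᵀ := by rw [hperm.1.1 φ, Matrix.mul_one]

lemma IsRepOf.intertwines {d e : ℕ} {T : Γ → Matrix (Fin d) (Fin d) ℝ}
    {S : Γ → Matrix (Fin e) (Fin e) ℝ} {v : Fin n → Fin d → ℝ} {w : Fin n → Fin e → ℝ}
    (hT : IsRepOf Γ T v) (hS : IsRepOf Γ S w) (φ : Γ) :
    S φ * ((arrMat w)ᵀ * arrMat v) = (arrMat w)ᵀ * arrMat v * T φ := by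
  have hT' := (isRepOf_iff Γ).mp hT
  have hS' := (isRepOf_iff Γ).mp hS
  have hreindex : (arrMat w)ᵀ * arrMat v = S φ * ((arrMat w)ᵀ * arrMat v) * (T φ)ᵀ := by
    calc (arrMat w)ᵀ * arrMat v
        = ((arrMat w).submatrix φ.val id)ᵀ * (arrMat v).submatrix φ.val id := by
          rw [transpose_submatrix, submatrix_mul_equiv, submatrix_id_id]
      _ = S φ * ((arrMat w)ᵀ * arrMat v) * (T φ)ᵀ := by
          rw [hT'.2 φ, hS'.2 φ, transpose_mul, transpose_transpose]
          simp only [Matrix.mul_assoc]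
  calc S φ * ((arrMat w)ᵀ * arrMat v)
      = S φ * ((arrMat w)ᵀ * arrMat v) * ((T φ)ᵀ * T φ) := by rw [hT'.1.1 φ, Matrix.mul_one]
    _ = (arrMat w)ᵀ * arrMat v * T φ := by
        conv_rhs => rw [hreindex]
        simp only [Matrix.mul_assoc]

lemma IsRepOf.mul_left {d : ℕ} {T : Γ → Matrix (Fin d) (Fin d) ℝ} {v : Fin n → Fin d → ℝ}
    (hT : IsRepOf Γ T v) {U : Matrix (Fin n) (Fin n) ℝ} (hU : PermInvariant Γ U) :
    IsRepOf Γ T (U * arrMat v) := by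
  have hT' := (isRepOf_iff Γ).mp hT
  refine (isRepOf_iff Γ).mpr ⟨hT'.1, fun φ => ?_⟩
  change (U * arrMat v).submatrix φ.val id = U * arrMat v * (T φ)ᵀ
  rw [← submatrix_mul_equiv U (arrMat v) φ.val φ.val id, hU φ, hT'.2 φ, Matrix.mul_assoc]

lemma IsNormalized.mul_left {d : ℕ} {v : Fin n → Fin d → ℝ} (hv : IsNormalized v)
    {U : Matrix (Fin n) (Fin n) ℝ} (hU : Uᵀ * U = 1) : IsNormalized (U * arrMat v) := by
  change (U * arrMat v)ᵀ * (U * arrMat v) = 1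
  rw [transpose_mul, Matrix.mul_assoc, ← Matrix.mul_assoc Uᵀ, hU, Matrix.one_mul]
  exact hv

end Arrangements

section Rigidity

variable {n e : ℕ} {Γ : Subgroup (Equiv.Perm (Fin n))}

lemma deformEquiv_cayley_mul {v : Fin n → Fin e → ℝ} (hv : v ∈ SdSet n e Γ)
    {A : Matrix (Fin n) (Fin n) ℝ} (hA : Aᵀ = -A) (hAΓ : PermInvariant Γ A) :
    DeformEquiv Γ v (cayley A * arrMat v) := by
  obtain ⟨hvn, T, hT⟩ := hv
  have hskew : ∀ t : ℝ, (t • A)ᵀ = -(t • A) := fun t => by rw [transpose_smul, hA, smul_neg]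
  refine ⟨fun t => cayley (t • A) * arrMat v,
    ((continuous_cayley_smul hA).matrix_mul continuous_const).continuousOn,
    fun t _ => ⟨hvn.mul_left (cayley_transpose_mul_self (hskew t)),
      T, hT.mul_left (hAΓ.smul t).cayley⟩, ?_, by simp only [one_smul]; rfl⟩
  simp only [cayley, zero_smul, sub_zero, add_zero, inv_one, Matrix.one_mul]
  rfl

lemma mul_arrMat_eq_zero_of_rigid {v : Fin n → Fin e → ℝ} (hv : v ∈ SdSet n e Γ)
    (hrig : ∀ w, DeformEquiv Γ v w → AreEquivalent v w)
    {A : Matrix (Fin n) (Fin n) ℝ} (hA : Aᵀ = -A) (hAΓ : PermInvariant Γ A)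
    (hMAM : (arrMat v)ᵀ * A * arrMat v = 0) : A * arrMat v = 0 := by
  set M := arrMat v
  have hM : Mᵀ * M = 1 := hv.1
  obtain ⟨X, -, hX⟩ := hrig _ (deformEquiv_cayley_mul hv hA hAΓ)
  have hMX : M * Xᵀ = cayley A * M := (forall_mulVec_eq_iff X v _).mp hX
  have hdeform : (1 + A) * M = (1 - A) * (M * Xᵀ) := by
    rw [hMX, ← Matrix.mul_assoc, one_sub_mul_cayley hA]
  have hX1 : Xᵀ = 1 := by
    have := congrArg (Mᵀ * ·) hdeform
    simp only [Matrix.add_mul, Matrix.sub_mul, Matrix.mul_add, Matrix.mul_sub, Matrix.one_mul,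
      ← Matrix.mul_assoc, hM, hMAM, add_zero, zero_mul, sub_zero] at this
    exact this.symm
  rw [hX1, Matrix.mul_one, Matrix.add_mul, Matrix.sub_mul, Matrix.one_mul] at hdeform
  have hneg : A * M = -(A * M) := add_left_cancel (hdeform.trans (sub_eq_add_neg _ _))
  have htwo : (2 : ℝ) • (A * M) = 0 := by
    rw [two_smul]
    nth_rewrite 2 [hneg]
    exact add_neg_cancel _
  exact (smul_eq_zero.mp htwo).resolve_left two_ne_zero

end Rigidity

section Schur

variable {n e e' : ℕ} {Γ : Subgroup (Equiv.Perm (Fin n))}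

lemma IrredRep.eq_zero_or_bijective_of_intertwines {T : Γ → Matrix (Fin e) (Fin e) ℝ}
    {S : Γ → Matrix (Fin e') (Fin e') ℝ} (hT : IrredRep Γ T) (hS : IrredRep Γ S)
    {K : Matrix (Fin e') (Fin e) ℝ} (hK : ∀ φ, S φ * K = K * T φ) :
    K = 0 ∨ Function.Bijective K.mulVecLin := by
  have hker := hT (LinearMap.ker K.mulVecLin) fun φ x hx => by
    rw [LinearMap.mem_ker, mulVecLin_apply] at hx ⊢
    rw [mulVec_mulVec, ← hK, ← mulVec_mulVec, hx, mulVec_zero]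
  have hrange := hS (LinearMap.range K.mulVecLin) fun φ x ⟨y, hy⟩ =>
    ⟨T φ *ᵥ y, by rw [← hy, mulVecLin_apply, mulVecLin_apply, mulVec_mulVec, mulVec_mulVec, hK]⟩
  rcases hker with hker | hker
  · rcases hrange with hrange | hrange
    · exact .inl (eq_zero_of_mulVecLin_eq_zero (LinearMap.range_eq_bot.mp hrange))
    · exact .inr ⟨LinearMap.ker_eq_bot.mp hker, LinearMap.range_eq_top.mp hrange⟩
  · exact .inl (eq_zero_of_mulVecLin_eq_zero (LinearMap.ker_eq_top.mp hker))

end Schur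

lemma transpose_mul_eq_zero_of_rigid {n e e' : ℕ} {Γ : Subgroup (Equiv.Perm (Fin n))}
    {v : Fin n → Fin e → ℝ} {w : Fin n → Fin e' → ℝ} (hv : IsNormalized v) (hw : IsNormalized w)
    {T : Γ → Matrix (Fin e) (Fin e) ℝ} (hT : IsRepOf Γ T v) (hTirr : IrredRep Γ T)
    {S : Γ → Matrix (Fin e') (Fin e') ℝ} (hS : IsRepOf Γ S w) (hSirr : IrredRep Γ S)
    (hrig : ∀ u, DeformEquiv Γ v u → AreEquivalent v u) (hne : ¬ AreEquivalentDep v w) :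
    (arrMat w)ᵀ * arrMat v = 0 := by
  set M := arrMat v
  set N := arrMat w
  set K := Nᵀ * M
  have hM : Mᵀ * M = 1 := hv
  have hN : Nᵀ * N = 1 := hw
  set A := N * Nᵀ * (M * Mᵀ) - M * Mᵀ * (N * Nᵀ)
  have hA : Aᵀ = -A := by
    simp only [A, transpose_sub, transpose_mul, transpose_transpose, neg_sub, Matrix.mul_assoc]
  have hAΓ : PermInvariant Γ A :=
    (hS.permInvariant_mul_transpose.mul hT.permInvariant_mul_transpose).sub
      (hT.permInvariant_mul_transpose.mul hS.permInvariant_mul_transpose)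
  have hMAM : Mᵀ * A * M = 0 := by
    simp only [A, Matrix.mul_sub, Matrix.sub_mul, ← Matrix.mul_assoc, hM, Matrix.one_mul]
    simp only [Matrix.mul_assoc, hM, Matrix.mul_one, sub_self]
  have hNK : N * K = M * (Kᵀ * K) := by
    have hAM : A * M = 0 := mul_arrMat_eq_zero_of_rigid ⟨hv, T, hT⟩ hrig hA hAΓ hMAM
    simp only [A, Matrix.sub_mul, Matrix.mul_assoc, hM, Matrix.mul_one, sub_eq_zero] at hAM
    simpa only [K, transpose_mul, transpose_transpose, Matrix.mul_assoc] using hAM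
  have hK : K * (Kᵀ * K) = K :=
    calc K * (Kᵀ * K) = Nᵀ * (M * (Kᵀ * K)) := Matrix.mul_assoc _ _ _
      _ = K := by rw [← hNK, ← Matrix.mul_assoc, hN, Matrix.one_mul]
  rcases hTirr.eq_zero_or_bijective_of_intertwines hSirr (hT.intertwines hS) with hK0 | hKbij
  · exact hK0
  refine absurd ⟨K.mulVecLin, hKbij, (forall_mulVec_eq_iff K v w).mpr ?_⟩ hne
  have hKtK : Kᵀ * K = 1 := by
    refine sub_eq_zero.mp (eq_zero_of_mul_eq_zero_of_injective hKbij.1 ?_)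
    rw [Matrix.mul_sub, hK, Matrix.mul_one, sub_self]
  have hKKt : K * Kᵀ = 1 := by
    refine sub_eq_zero.mp (eq_zero_of_mul_eq_zero_of_surjective hKbij.2 ?_)
    rw [Matrix.sub_mul, Matrix.mul_assoc, hKtK, Matrix.mul_one, Matrix.one_mul, sub_self]
  calc M * Kᵀ = N * K * Kᵀ := by rw [hNK, hKtK, Matrix.mul_one]
    _ = N := by rw [Matrix.mul_assoc, hKKt, Matrix.mul_one]

section SigmaCols

variable {m ι R : Type*} {κ : ι → Type*}

def Matrix.sigmaCols (M : ∀ j, Matrix m (κ j) R) : Matrix m (Σ j, κ j) R :=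
  Matrix.of fun r s => M s.1 r s.2

lemma Matrix.transpose_sigmaCols_mul_sigmaCols_eq_one [Fintype m] [DecidableEq ι]
    [∀ j, DecidableEq (κ j)] [CommRing R] (M : ∀ j, Matrix m (κ j) R)
    (hnorm : ∀ j, (M j)ᵀ * M j = 1) (horth : ∀ i j, i ≠ j → (M i)ᵀ * M j = 0) :
    (sigmaCols M)ᵀ * sigmaCols M = 1 := by
  ext ⟨i, a⟩ ⟨j, b⟩
  change ((M i)ᵀ * M j) a b = _
  by_cases hij : i = j
  · subst hij
    rw [hnorm]
    by_cases hab : a = b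
    · subst hab; simp
    · rw [one_apply_ne hab, one_apply_ne (by simpa using hab)]
  · rw [horth i j hij, one_apply_ne (by simp [hij])]
    rfl

end SigmaCols

theorem stmt18_general {n : ℕ} (Γ : Subgroup (Equiv.Perm (Fin n))) (d k : ℕ)
    (dims : Fin k → ℕ) (hdims : ∀ j, d ≤ dims j)
    (v : (j : Fin k) → Fin n → Fin (dims j) → ℝ)
    (hmem : ∀ j, v j ∈ SdSet n (dims j) Γ)
    (hirr : ∀ j, ∃ T : Γ → Matrix (Fin (dims j)) (Fin (dims j)) ℝ,
      IsRepOf Γ T (v j) ∧ IrredRep Γ T)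
    (hrigid : ∀ j, ∀ w : Fin n → Fin (dims j) → ℝ,
      DeformEquiv Γ (v j) w → AreEquivalent (v j) w)
    (hnoneq : ∀ i j, i ≠ j → ¬ AreEquivalentDep (v i) (v j)) :
    d * k ≤ n := by
  have horth : ∀ i j, i ≠ j → (arrMat (v i))ᵀ * arrMat (v j) = 0 := fun i j hij => by
    obtain ⟨T, hT, hTirr⟩ := hirr j
    obtain ⟨S, hS, hSirr⟩ := hirr i
    exact transpose_mul_eq_zero_of_rigid (hmem j).1 (hmem i).1 hT hTirr hS hSirr (hrigid j)
      (hnoneq j i (Ne.symm hij))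
  have hcard := card_le_card_of_transpose_mul_self_eq_one
    (transpose_sigmaCols_mul_sigmaCols_eq_one (fun j => arrMat (v j)) (fun j => (hmem j).1) horth)
  calc d * k = ∑ _j : Fin k, d := by simp [mul_comm]
    _ ≤ ∑ j, dims j := Finset.sum_le_sum fun j _ => hdims j
    _ ≤ n := by simpa using hcard

theorem stmt18 {n : ℕ} (Γ : Subgroup (Equiv.Perm (Fin n))) (d k : ℕ) (hd : 1 ≤ d)
    (dims : Fin k → ℕ) (hdims : ∀ j, d ≤ dims j)
    (v : (j : Fin k) → Fin n → Fin (dims j) → ℝ)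
    (hmem : ∀ j, v j ∈ SdSet n (dims j) Γ)
    (hirr : ∀ j, ∃ T : Γ → Matrix (Fin (dims j)) (Fin (dims j)) ℝ,
      IsRepOf Γ T (v j) ∧ IrredRep Γ T)
    (hrigid : ∀ j, ∀ w : Fin n → Fin (dims j) → ℝ,
      DeformEquiv Γ (v j) w → AreEquivalent (v j) w)
    (hnoneq : ∀ i j, i ≠ j → ¬ AreEquivalentDep (v i) (v j)) :
    d * k ≤ n :=
  stmt18_general Γ d k dims hdims v hmem hirr hrigid hnoneq
end
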